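/- Let G be a simple graph on vertex set Fin n. Then the graph-state stabilizers S_u (u ∈ Fin n) pairwise commute, and for every set S of vertices, ∏_{u ∈ S} S_u = (−1)^{e(S)} • (∏_{u ∈ S} X_u) ∘ (∏_{v ∈ Odd(S)} Z_v), where e(S) is the number of edges of G with both endpoints in S and Odd(S) is the set of vertices adjacent to an odd number of elements of S. -/

import Mathlib

/-- The `n`-qubit state space, realized as the complex vector space of functions
`(Fin n → Fin 2) → ℂ`. -/
abbrev QState (n : ℕ) := (Fin n → Fin 2) → ℂ

/-- The single-qubit Pauli `X` operator on qubit `q`: `(X_q ψ)(f) = ψ(f')` where `f'`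
agrees with `f` except that the `q`-th bit is flipped (addition of `1` in `Fin 2`). -/
def Xop (n : ℕ) (q : Fin n) : Module.End ℂ (QState n) where
  toFun ψ := fun f => ψ (f + Pi.single q 1)
  map_add' _ _ := rfl
  map_smul' _ _ := by funext f; rfl

/-- The single-qubit Pauli `Z` operator on qubit `q`: `(Z_q ψ)(f) = (−1)^{f q} ψ(f)`. -/
def Zop (n : ℕ) (q : Fin n) : Module.End ℂ (QState n) where
  toFun ψ := fun f => (-1 : ℂ) ^ (f q : ℕ) * ψ f
  map_add' ψ φ := by funext f; simp [mul_add]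
  map_smul' c ψ := by funext f; simp; ring

lemma Xop_comm (n : ℕ) (q q' : Fin n) : Commute (Xop n q) (Xop n q') := by
  apply LinearMap.ext
  intro ψ
  funext f
  simp only [Module.End.mul_apply, Xop, LinearMap.coe_mk, AddHom.coe_mk]
  rw [add_right_comm]

lemma Zop_comm (n : ℕ) (q q' : Fin n) : Commute (Zop n q) (Zop n q') := by
  apply LinearMap.ext
  intro ψ
  funext f
  simp only [Module.End.mul_apply, Zop, LinearMap.coe_mk, AddHom.coe_mk]
  ring

/-- The product `∏_{q ∈ S} X_q` (well-defined since the `X_q` pairwise commute). -/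
noncomputable def Xprod (n : ℕ) (S : Finset (Fin n)) : Module.End ℂ (QState n) :=
  S.noncommProd (Xop n) fun a _ b _ _ => Xop_comm n a b

/-- The product `∏_{q ∈ S} Z_q` (well-defined since the `Z_q` pairwise commute). -/
noncomputable def Zprod (n : ℕ) (S : Finset (Fin n)) : Module.End ℂ (QState n) :=
  S.noncommProd (Zop n) fun a _ b _ _ => Zop_comm n a b

/-- The graph-state stabilizer `S_u = X_u ∘ ∏_{v ∈ N(u)} Z_v`. -/
noncomputable def stab (n : ℕ) (G : SimpleGraph (Fin n)) [DecidableRel G.Adj] (u : Fin n) :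
    Module.End ℂ (QState n) :=
  Xop n u * Zprod n (G.neighborFinset u)

/-- The odd neighbourhood of `S`: vertices adjacent to an odd number of elements of `S`. -/
def oddNbhd {n : ℕ} (G : SimpleGraph (Fin n)) [DecidableRel G.Adj]
    (S : Finset (Fin n)) : Finset (Fin n) :=
  Finset.univ.filter fun v => Odd (S.filter (G.Adj v)).card

/-- The number of edges of `G` with both endpoints in `S`. -/
def edgesIn {n : ℕ} (G : SimpleGraph (Fin n)) [DecidableRel G.Adj]
    (S : Finset (Fin n)) : ℕ :=
  (G.edgeFinset.filter fun e => ∀ v ∈ e, v ∈ S).card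

lemma neg_one_pow_succ : ∀ x : Fin 2, (-1:ℂ)^(((x+1) : Fin 2):ℕ) = -(-1)^(x:ℕ) := by
  intro x; fin_cases x <;> simp

lemma Zop_sq (n : ℕ) (q : Fin n) : Zop n q * Zop n q = 1 := by
  apply LinearMap.ext; intro ψ; funext f
  simp only [Module.End.mul_apply, Zop, LinearMap.coe_mk, AddHom.coe_mk, Module.End.one_apply]
  rw [← mul_assoc, ← mul_pow]; norm_num

lemma ZX_ne (n : ℕ) {q p : Fin n} (h : q ≠ p) : Zop n q * Xop n p = Xop n p * Zop n q := by
  apply LinearMap.ext; intro ψ; funext f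
  simp only [Module.End.mul_apply, Zop, Xop, LinearMap.coe_mk, AddHom.coe_mk]
  rw [Pi.add_apply, Pi.single_eq_of_ne h, add_zero]

lemma ZX_eq (n : ℕ) (q : Fin n) : Zop n q * Xop n q = -(Xop n q * Zop n q) := by
  apply LinearMap.ext; intro ψ; funext f
  simp only [Module.End.mul_apply, Zop, Xop, LinearMap.coe_mk, AddHom.coe_mk,
    LinearMap.neg_apply, Pi.neg_apply]
  rw [Pi.add_apply, Pi.single_eq_same, neg_one_pow_succ, neg_mul, neg_neg]

lemma Zprod_insert (n : ℕ) {T : Finset (Fin n)} {a : Fin n} (h : a ∉ T) :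
    Zprod n (insert a T) = Zop n a * Zprod n T :=
  Finset.noncommProd_insert_of_notMem _ _ _ _ h

lemma Xprod_insert (n : ℕ) {T : Finset (Fin n)} {a : Fin n} (h : a ∉ T) :
    Xprod n (insert a T) = Xop n a * Xprod n T :=
  Finset.noncommProd_insert_of_notMem _ _ _ _ h

lemma negsm (n : ℕ) (A : Module.End ℂ (QState n)) : (-1 : ℂ) • A = -A := neg_one_smul ℂ A

lemma smulmul (n : ℕ) (c : ℂ) (A B : Module.End ℂ (QState n)) : (c • A) * B = c • (A*B) := smul_mul_assoc c A B

lemma mulsmul (n : ℕ) (c : ℂ) (A B : Module.End ℂ (QState n)) : A * (c • B) = c • (A*B) := mul_smul_comm c A B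

lemma smulsmul (n : ℕ) (c d : ℂ) (A : Module.End ℂ (QState n)) : c • d • A = (c*d) • A := smul_smul c d A

lemma negmul (n : ℕ) (A B : Module.End ℂ (QState n)) : (-A) * B = -(A*B) := neg_mul A B

lemma Emul_assoc (n : ℕ) (A B C : Module.End ℂ (QState n)) : A * B * C = A * (B * C) := mul_assoc A B C

lemma Zprod_mul_Xop (n : ℕ) (T : Finset (Fin n)) (p : Fin n) :
    Zprod n T * Xop n p = (if p ∈ T then (-1 : ℂ) else 1) • (Xop n p * Zprod n T) := by
  induction T using Finset.induction_on with
  | empty => simp [Zprod, Finset.noncommProd_empty]; exact (one_mul _).trans (mul_one _).symm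
  | @insert a T ha ih =>
    rw [Zprod_insert n ha, Emul_assoc, ih, mulsmul, ← Emul_assoc]
    by_cases hpa : p = a
    · subst hpa
      have hpT : p ∉ T := ha
      simp only [hpT, if_false, Finset.mem_insert, true_or, if_true, one_smul]
      rw [negsm, ZX_eq n p, negmul, Emul_assoc]
    · rw [ZX_ne n (Ne.symm hpa), Emul_assoc]
      simp only [Finset.mem_insert, hpa, false_or]

lemma Zprod_mul_Xprod (n : ℕ) (T S : Finset (Fin n)) :
    Zprod n T * Xprod n S = ((-1 : ℂ) ^ (T ∩ S).card) • (Xprod n S * Zprod n T) := by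
  induction S using Finset.induction_on with
  | empty => simp [Xprod, Finset.noncommProd_empty]; exact (mul_one _).trans (one_mul _).symm
  | @insert a S ha ih =>
    rw [Xprod_insert n ha, ← Emul_assoc, Zprod_mul_Xop, smulmul, Emul_assoc, ih, mulsmul,
      smulsmul, ← Emul_assoc]
    by_cases haT : a ∈ T
    · have h1 : T ∩ insert a S = insert a (T ∩ S) := by
        ext x
        by_cases hx : x = a
        · subst hx; simp [haT, ha]
        · simp [Finset.mem_inter, Finset.mem_insert, hx]
      have h2 : a ∉ T ∩ S := by simp [ha]
      rw [h1, Finset.card_insert_of_notMem h2, if_pos haT]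
      ring_nf
    · have h1 : T ∩ insert a S = T ∩ S := by
        ext x
        by_cases hx : x = a
        · subst hx; simp [haT]
        · simp [Finset.mem_inter, Finset.mem_insert, hx]
      rw [h1, if_neg haT, one_mul]

lemma Zop_mul_Zprod (n : ℕ) (a : Fin n) (U : Finset (Fin n)) :
    Zop n a * Zprod n U = if a ∈ U then Zprod n (U.erase a) else Zprod n (insert a U) := by
  by_cases h : a ∈ U
  · rw [if_pos h]
    conv_lhs => rw [← Finset.insert_erase h, Zprod_insert n (Finset.notMem_erase a U),
      ← Emul_assoc, Zop_sq]
    rw [one_mul]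
  · rw [if_neg h, Zprod_insert n h]

open scoped symmDiff in
lemma Zprod_mul_Zprod (n : ℕ) (T T' : Finset (Fin n)) :
    Zprod n T * Zprod n T' = Zprod n (T ∆ T') := by
  induction T using Finset.induction_on with
  | empty =>
    have : (∅ : Finset (Fin n)) ∆ T' = T' := by ext x; simp [Finset.mem_symmDiff]
    simp [Zprod, Finset.noncommProd_empty, this]; exact one_mul _
  | @insert a T ha ih =>
    rw [Zprod_insert n ha, Emul_assoc, ih, Zop_mul_Zprod]
    by_cases h : a ∈ T'
    · have haU : a ∈ T ∆ T' := by
        rw [Finset.mem_symmDiff]; right; exact ⟨h, ha⟩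
      rw [if_pos haU]
      congr 1
      ext x
      simp only [Finset.mem_erase, Finset.mem_symmDiff, Finset.mem_insert]
      by_cases hx : x = a
      · subst hx; simp [h, ha]
      · simp [hx]
    · have haU : a ∉ T ∆ T' := by
        rw [Finset.mem_symmDiff]; rintro (⟨h1, _⟩ | ⟨h1, _⟩); exact ha h1; exact h h1
      rw [if_neg haU]
      congr 1
      ext x
      simp only [Finset.mem_insert, Finset.mem_symmDiff]
      by_cases hx : x = a
      · subst hx; simp [h, ha]
      · simp [hx]

open scoped symmDiff in
lemma oddNbhd_insert {n : ℕ} (G : SimpleGraph (Fin n)) [DecidableRel G.Adj]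
    {S : Finset (Fin n)} {u : Fin n} (hu : u ∉ S) :
    oddNbhd G (insert u S) = G.neighborFinset u ∆ oddNbhd G S := by
  ext v
  simp only [oddNbhd, Finset.mem_filter, Finset.mem_univ, true_and, Finset.mem_symmDiff,
    SimpleGraph.mem_neighborFinset]
  rw [Finset.filter_insert]
  by_cases hadj : G.Adj v u
  · have hu' : u ∉ S.filter (G.Adj v) := fun h => hu (Finset.mem_filter.mp h).1
    rw [if_pos hadj, Finset.card_insert_of_notMem hu', Nat.odd_add_one]
    have : G.Adj u v := hadj.symm
    simp [this, Nat.not_odd_iff_even, Nat.not_even_iff_odd]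
  · rw [if_neg hadj]
    have : ¬ G.Adj u v := fun h => hadj h.symm
    simp [this]

lemma edgesIn_insert {n : ℕ} (G : SimpleGraph (Fin n)) [DecidableRel G.Adj]
    {S : Finset (Fin n)} {u : Fin n} (hu : u ∉ S) :
    edgesIn G (insert u S) = (G.neighborFinset u ∩ S).card + edgesIn G S := by
  classical
  unfold edgesIn
  set s₀ := G.edgeFinset.filter (fun e => ∀ v ∈ e, v ∈ insert u S) with hs₀
  have hsplit : (s₀.filter (fun e => u ∈ e)).card + (s₀.filter (fun e => ¬ u ∈ e)).card
      = s₀.card := Finset.card_filter_add_card_filter_not _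
  have hB : s₀.filter (fun e => ¬ u ∈ e) = G.edgeFinset.filter (fun e => ∀ v ∈ e, v ∈ S) := by
    rw [hs₀, Finset.filter_filter]
    apply Finset.filter_congr
    intro e he
    constructor
    · rintro ⟨h1, h2⟩ v hv
      rcases Finset.mem_insert.mp (h1 v hv) with rfl | h
      · exact absurd hv h2
      · exact h
    · intro h
      refine ⟨fun v hv => Finset.mem_insert_of_mem (h v hv), fun huv => hu (h u huv)⟩
  have hA : (G.neighborFinset u ∩ S).card = (s₀.filter (fun e => u ∈ e)).card := by
    apply Finset.card_bij (fun w _ => s(u, w))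
    · intro w hw
      rw [Finset.mem_inter, SimpleGraph.mem_neighborFinset] at hw
      simp only [hs₀, Finset.mem_filter, SimpleGraph.mem_edgeFinset]
      refine ⟨⟨hw.1, ?_⟩, Sym2.mem_mk_left u w⟩
      intro v hv
      rcases Sym2.mem_iff.mp hv with rfl | rfl
      · exact Finset.mem_insert_self _ _
      · exact Finset.mem_insert_of_mem hw.2
    · intro w1 h1 w2 h2 heq
      rw [Sym2.eq_iff] at heq
      rcases heq with ⟨_, rfl⟩ | ⟨rfl, rfl⟩
      · rfl
      · rfl
    · intro e he
      simp only [Finset.mem_filter, hs₀, SimpleGraph.mem_edgeFinset] at he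
      obtain ⟨⟨hadj, hmem⟩, hue⟩ := he
      induction e using Sym2.ind with
      | _ x y =>
        have hxy : G.Adj x y := hadj
        rcases Sym2.mem_iff.mp hue with rfl | rfl
        · have hy : y ∈ S := by
            rcases Finset.mem_insert.mp (hmem y (Sym2.mem_mk_right _ y)) with rfl | h
            · exact absurd hxy (G.irrefl)
            · exact h
          exact ⟨y, Finset.mem_inter.mpr ⟨(SimpleGraph.mem_neighborFinset _ _ _).mpr hxy, hy⟩, rfl⟩
        · have hx : x ∈ S := by
            rcases Finset.mem_insert.mp (hmem x (Sym2.mem_mk_left x _)) with rfl | h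
            · exact absurd hxy (G.irrefl)
            · exact h
          refine ⟨x, Finset.mem_inter.mpr ⟨(SimpleGraph.mem_neighborFinset _ _ _).mpr hxy.symm, hx⟩, Sym2.eq_swap⟩
  rw [hA, ← hB]
  omega

open scoped symmDiff in
lemma stab_expand (n : ℕ) (G : SimpleGraph (Fin n)) [DecidableRel G.Adj] (u v : Fin n) :
    stab n G u * stab n G v =
      (if v ∈ G.neighborFinset u then (-1 : ℂ) else 1) •
        (Xop n u * Xop n v * Zprod n (G.neighborFinset u ∆ G.neighborFinset v)) := by
  unfold stab
  rw [Emul_assoc, ← Emul_assoc n (Zprod n (G.neighborFinset u)), Zprod_mul_Xop,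
    smulmul, mulsmul, Emul_assoc n (Xop n v), Zprod_mul_Zprod, ← Emul_assoc]

lemma stab_comm (n : ℕ) (G : SimpleGraph (Fin n)) [DecidableRel G.Adj] (u v : Fin n) :
    Commute (stab n G u) (stab n G v) := by
  unfold Commute SemiconjBy
  rw [stab_expand, stab_expand]
  have h1 : (if v ∈ G.neighborFinset u then (-1 : ℂ) else 1)
      = (if u ∈ G.neighborFinset v then (-1 : ℂ) else 1) := by
    have : (v ∈ G.neighborFinset u) ↔ (u ∈ G.neighborFinset v) := by
      simp [SimpleGraph.mem_neighborFinset, G.adj_comm]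
    simp only [this]
  rw [h1, symmDiff_comm, (Xop_comm n u v).eq]

lemma edgesIn_empty {n : ℕ} (G : SimpleGraph (Fin n)) [DecidableRel G.Adj] :
    edgesIn G (∅ : Finset (Fin n)) = 0 := by
  unfold edgesIn
  rw [Finset.card_eq_zero, Finset.filter_false_of_mem]
  intro e he h
  exact absurd (h e.out.1 (Sym2.out_fst_mem e)) (Finset.notMem_empty _)

lemma oddNbhd_empty {n : ℕ} (G : SimpleGraph (Fin n)) [DecidableRel G.Adj] :
    oddNbhd G (∅ : Finset (Fin n)) = ∅ := by
  unfold oddNbhd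
  rw [Finset.filter_false_of_mem]
  intro v _
  simp

/-- The graph-state stabilizers pairwise commute, and for every set `S`
of vertices, `∏_{u ∈ S} S_u = (−1)^{e(S)} • (∏_{u ∈ S} X_u) ∘ (∏_{v ∈ Odd(S)} Z_v)`. -/
theorem graph_state_stabilizers (n : ℕ) (G : SimpleGraph (Fin n)) [DecidableRel G.Adj] :
    ∃ hcomm : ∀ u v : Fin n, Commute (stab n G u) (stab n G v),
      ∀ S : Finset (Fin n),
        S.noncommProd (stab n G) (fun a _ b _ _ => hcomm a b) =
          ((-1 : ℂ) ^ edgesIn G S) • (Xprod n S * Zprod n (oddNbhd G S)) := by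
  refine ⟨stab_comm n G, ?_⟩
  intro S
  induction S using Finset.induction_on with
  | empty =>
    simp [Finset.noncommProd_empty, edgesIn_empty, oddNbhd_empty, Xprod, Zprod]; rfl
  | @insert u S ha ih =>
    refine (Finset.noncommProd_insert_of_notMem _ _ _ _ ha).trans ?_
    rw [ih]
    unfold stab
    rw [mulsmul, Emul_assoc, ← Emul_assoc n (Zprod n (G.neighborFinset u)), Zprod_mul_Xprod,
      smulmul, mulsmul, smulsmul, Emul_assoc n (Xprod n S), Zprod_mul_Zprod,
      ← Emul_assoc n (Xop n u), ← Xprod_insert n ha,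
      oddNbhd_insert G ha, edgesIn_insert G ha, ← pow_add, Nat.add_comm]
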